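/- Let V be a real Banach space, let v ∈ V with ‖v‖ ≤ 1, and let δ : V × V → V be a linear map satisfying δ(v,v) = v and ‖δ(x,y)‖ ≤ (‖x‖ + ‖y‖)/2 for all x, y ∈ V. Then there exists a unique continuous linear map T : L¹([0,1];ℝ) → V such that T(𝟙) = v and T(γ(f,g)) = δ(T(f), T(g)) for all f, g ∈ L¹([0,1];ℝ). -/

import Mathlib

/-!
Let `e n k` be the indicator of the dyadic interval `[k/2ⁿ, (k+1)/2ⁿ)`. Then
`e (n+1) k = γ (e n k) 0` and `e (n+1) (2ⁿ + k) = γ 0 (e n k)`, so any `T` as in the theorem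
sends `e n k` to the vector `w n k` obtained from `v` by applying `δ (·, 0)` or `δ (0, ·)` along
the binary digits of `k`. The `e n k` span a dense subspace of `L¹`, which gives uniqueness.

For existence, `‖w n k‖ ≤ 2⁻ⁿ`, so the operators `Tₙ f = ∑ₖ 2ⁿ (∫_{[k/2ⁿ, (k+1)/2ⁿ)} f) • w n k`
are contractions, and `δ (v, v) = v` makes `w n k = w (n+1) (2k) + w (n+1) (2k+1)`, so that
`Tₘ (e n k) = w n k` for all `m ≥ n`. Hence `Tₙ` converges pointwise on a dense set, therefore
everywhere, to a continuous `T` with `T (e n k) = w n k`. Since `γ` is linear and halves norms,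
`T ∘ γ` and `δ ∘ (T × T)` are continuous and agree on the generators, hence everywhere.
-/

open MeasureTheory

noncomputable def μ01 : Measure ℝ := volume.restrict (Set.Icc 0 1)

abbrev L1 : Type := Lp ℝ 1 μ01

def IsJux (γ : L1 → L1 → L1) : Prop :=
  ∀ f g : L1,
    (∀ᵐ x ∂μ01, x ∈ Set.Ico (0 : ℝ) (1 / 2) → γ f g x = f (2 * x)) ∧
    (∀ᵐ x ∂μ01, x ∈ Set.Icc (1 / 2 : ℝ) 1 → γ f g x = g (2 * x - 1))

def IsOne (one : L1) : Prop := (one : ℝ → ℝ) =ᵐ[μ01] fun _ => (1 : ℝ)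

open Set Filter Topology
open scoped symmDiff Interval

section General

variable {𝕜 E F : Type*} [NontriviallyNormedField 𝕜] [NormedAddCommGroup E] [NormedSpace 𝕜 E]
  [NormedAddCommGroup F] [NormedSpace 𝕜 F]

theorem ContinuousLinearMap.cauchySeq_apply_of_dense {T : ℕ → E →L[𝕜] F} {C : ℝ}
    (hT : ∀ n, ‖T n‖ ≤ C) {s : Set E} (hs : Dense s) (h : ∀ x ∈ s, CauchySeq fun n => T n x)
    (x : E) : CauchySeq fun n => T n x := by
  have hC : 0 ≤ C := (norm_nonneg _).trans (hT 0)
  rw [Metric.cauchySeq_iff']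
  intro ε hε
  obtain ⟨y, hxy, hys⟩ := Metric.dense_iff.1 hs x (ε / (3 * (C + 1))) (by positivity)
  rw [Metric.mem_ball, dist_comm] at hxy
  obtain ⟨N, hN⟩ := Metric.cauchySeq_iff'.1 (h y hys) (ε / 3) (by positivity)
  have hclose : ∀ n, dist (T n x) (T n y) < ε / 3 := fun n => calc
    dist (T n x) (T n y) ≤ C * dist x y := by
      rw [dist_eq_norm, dist_eq_norm, ← map_sub]
      exact (T n).le_of_opNorm_le (hT n) _
    _ ≤ (C + 1) * dist x y := by gcongr; linarith
    _ < (C + 1) * (ε / (3 * (C + 1))) := by gcongr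
    _ = ε / 3 := by field_simp
  refine ⟨N, fun n hn => ?_⟩
  calc dist (T n x) (T N x) ≤ dist (T n x) (T n y) + dist (T n y) (T N y) + dist (T N y) (T N x) :=
        dist_triangle4 _ _ _ _
    _ < ε / 3 + ε / 3 + ε / 3 := by
        gcongr
        · exact hclose n
        · exact hN n hn
        · rw [dist_comm]; exact hclose N
    _ = ε := by ring

theorem ContinuousLinearMap.exists_tendsto_of_dense_span [CompleteSpace E] [CompleteSpace F]
    {T : ℕ → E →L[𝕜] F} {C : ℝ} (hT : ∀ n, ‖T n‖ ≤ C) {s : Set E}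
    (hs : Dense (Submodule.span 𝕜 s : Set E))
    (h : ∀ x ∈ s, ∃ y, Tendsto (fun n => T n x) atTop (𝓝 y)) :
    ∃ S : E →L[𝕜] F, ∀ x, Tendsto (fun n => T n x) atTop (𝓝 (S x)) := by
  have hspan : ∀ x ∈ Submodule.span 𝕜 s, ∃ y, Tendsto (fun n => T n x) atTop (𝓝 y) := by
    intro x hx
    induction hx using Submodule.span_induction with
    | mem x hx => exact h x hx
    | zero => exact ⟨0, by simp⟩
    | add x y _ _ hx hy =>
      obtain ⟨a, ha⟩ := hx
      obtain ⟨b, hb⟩ := hy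
      exact ⟨a + b, by simpa using ha.add hb⟩
    | smul c x _ hx =>
      obtain ⟨a, ha⟩ := hx
      exact ⟨c • a, by simpa using ha.const_smul c⟩
  have hlim : ∀ x, ∃ y, Tendsto (fun n => T n x) atTop (𝓝 y) := fun x =>
    cauchySeq_tendsto_of_complete (cauchySeq_apply_of_dense hT hs
      (fun y hy => (hspan y hy).choose_spec.cauchySeq) x)
  choose S hS using hlim
  exact ⟨continuousLinearMapOfTendsto T (tendsto_pi_nhds.2 hS), hS⟩

noncomputable def setIntegralCLM {α E : Type*} [MeasurableSpace α] [NormedAddCommGroup E]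
    [NormedSpace ℝ E] [CompleteSpace E] (μ : Measure α) (s : Set α) : (α →₁[μ] E) →L[ℝ] E :=
  L1.integralCLM.comp (LpToLpRestrictCLM α E ℝ μ 1 s)

lemma setIntegralCLM_apply {α E : Type*} [MeasurableSpace α] [NormedAddCommGroup E]
    [NormedSpace ℝ E] [CompleteSpace E] (μ : Measure α) (s : Set α) (f : α →₁[μ] E) :
    setIntegralCLM μ s f = ∫ x in s, f x ∂μ := by
  rw [← integral_congr_ae (LpToLpRestrictCLM_coeFn ℝ s f), ← L1.integral_eq_integral,
    L1.integral_eq, setIntegralCLM, ContinuousLinearMap.comp_apply]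

lemma indicatorConstLp_eq_smul_one {α : Type*} [MeasurableSpace α] {μ : Measure α}
    {p : ENNReal} [Fact (1 ≤ p)] {s : Set α} (hs : MeasurableSet s) (hμs : μ s ≠ ⊤) (c : ℝ) :
    indicatorConstLp p hs hμs c = c • indicatorConstLp p hs hμs (1 : ℝ) := by
  ext1
  filter_upwards [indicatorConstLp_coeFn (hs := hs) (hμs := hμs) (c := c),
    Lp.coeFn_smul c (indicatorConstLp p hs hμs (1 : ℝ)),
    indicatorConstLp_coeFn (hs := hs) (hμs := hμs) (c := (1 : ℝ))] with x hc hsmul h1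
  rw [hc, hsmul, Pi.smul_apply, h1]
  by_cases hx : x ∈ s <;> simp [hx]

end General

section UnitInterval

instance : IsFiniteMeasure μ01 := ⟨by simp [μ01]⟩

lemma ae_mem_Ico_μ01 : ∀ᵐ x ∂μ01, x ∈ Ico (0 : ℝ) 1 := by
  rw [μ01, ← Measure.restrict_congr_set Ico_ae_eq_Icc]
  exact ae_restrict_mem measurableSet_Ico

lemma integral_μ01 (F : ℝ → ℝ) : ∫ x, F x ∂μ01 = ∫ x in (0 : ℝ)..1, F x := by
  rw [μ01, intervalIntegral.integral_of_le zero_le_one, integral_Icc_eq_integral_Ioc]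

lemma intervalIntegrable_norm_coeFn (h : L1) {a b : ℝ} (ha : 0 ≤ a) (hab : a ≤ b) (hb : b ≤ 1) :
    IntervalIntegrable (fun x => ‖h x‖) volume a b := by
  have hint : IntegrableOn (fun x => ‖h x‖) (Icc 0 1) := (L1.integrable_coeFn h).norm
  exact (intervalIntegrable_iff_integrableOn_Icc_of_le hab).2 (hint.mono_set (Icc_subset_Icc ha hb))

lemma ae_μ01_iff {p : ℝ → Prop} : (∀ᵐ x ∂μ01, p x) ↔ ∀ᵐ x, x ∈ Icc (0 : ℝ) 1 → p x :=
  ae_restrict_iff' measurableSet_Icc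

end UnitInterval

section Intervals

def dyadicIco (n k : ℕ) : Set ℝ := Ico (k / 2 ^ n) ((k + 1) / 2 ^ n)

lemma mem_dyadicIco {n k : ℕ} {x : ℝ} :
    x ∈ dyadicIco n k ↔ k ≤ x * 2 ^ n ∧ x * 2 ^ n < k + 1 := by
  rw [dyadicIco, mem_Ico, div_le_iff₀ (by positivity), lt_div_iff₀ (by positivity)]

lemma measurableSet_dyadicIco (n k : ℕ) : MeasurableSet (dyadicIco n k) := measurableSet_Ico

lemma volume_dyadicIco (n k : ℕ) : volume (dyadicIco n k) = ENNReal.ofReal (2 ^ n)⁻¹ := by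
  rw [dyadicIco, Real.volume_Ico]
  congr 1
  field_simp
  ring

lemma dyadicIco_subset_Ico {n k : ℕ} (hk : k < 2 ^ n) : dyadicIco n k ⊆ Ico 0 1 := by
  intro x hx
  rw [mem_dyadicIco] at hx
  have hk' : (k : ℝ) + 1 ≤ 2 ^ n := by exact_mod_cast hk
  constructor <;> nlinarith [hx.1, hx.2, (by positivity : (0 : ℝ) < 2 ^ n)]

lemma disjoint_dyadicIco {n j k : ℕ} (hjk : j ≠ k) : Disjoint (dyadicIco n j) (dyadicIco n k) := by
  rw [Set.disjoint_left]
  intro x hj hk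
  rw [mem_dyadicIco] at hj hk
  rcases Nat.lt_or_gt_of_ne hjk with h | h
  · have : (j : ℝ) + 1 ≤ k := by exact_mod_cast h
    linarith [hj.2, hk.1]
  · have : (k : ℝ) + 1 ≤ j := by exact_mod_cast h
    linarith [hk.2, hj.1]

lemma dyadicIco_eq_union (n k : ℕ) :
    dyadicIco n k = dyadicIco (n + 1) (2 * k) ∪ dyadicIco (n + 1) (2 * k + 1) := by
  ext x
  simp only [mem_union, mem_dyadicIco, pow_succ]
  push_cast
  constructor
  · rintro ⟨h1, h2⟩
    rcases lt_or_ge (x * (2 ^ n * 2)) (2 * k + 1) with h | h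
    · left; constructor <;> nlinarith
    · right; constructor <;> nlinarith
  · rintro (⟨h1, h2⟩ | ⟨h1, h2⟩) <;> constructor <;> nlinarith

lemma preimage_two_mul_dyadicIco (n k : ℕ) :
    (fun x => 2 * x) ⁻¹' dyadicIco n k = dyadicIco (n + 1) k := by
  ext x
  simp only [mem_preimage, mem_dyadicIco, pow_succ]
  constructor <;> rintro ⟨h1, h2⟩ <;> constructor <;> linarith

lemma preimage_two_mul_sub_one_dyadicIco (n k : ℕ) :
    (fun x => 2 * x - 1) ⁻¹' dyadicIco n k = dyadicIco (n + 1) (2 ^ n + k) := by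
  ext x
  simp only [mem_preimage, mem_dyadicIco, pow_succ]
  push_cast
  constructor <;> rintro ⟨h1, h2⟩ <;> constructor <;> linarith

lemma dyadicIco_succ_subset_Iio {n k : ℕ} (hk : k < 2 ^ n) :
    dyadicIco (n + 1) k ⊆ Iio (1 / 2) := by
  rw [← preimage_two_mul_dyadicIco]
  intro x hx
  have := (dyadicIco_subset_Ico hk hx).2
  simp only [mem_Iio]
  linarith

lemma dyadicIco_succ_add_subset_Ici (n k : ℕ) : dyadicIco (n + 1) (2 ^ n + k) ⊆ Ici (1 / 2) := by
  intro x hx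
  rw [mem_dyadicIco, pow_succ] at hx
  push_cast at hx
  simp only [mem_Ici]
  nlinarith [hx.1, (by positivity : (0 : ℝ) < 2 ^ n), (by positivity : (0 : ℝ) ≤ k)]

lemma exists_dyadicIco_subset {U : Set ℝ} (hU : IsOpen U) {x : ℝ} (hxU : x ∈ U)
    (hx : x ∈ Ico 0 1) : ∃ n k, k < 2 ^ n ∧ x ∈ dyadicIco n k ∧ dyadicIco n k ⊆ U := by
  obtain ⟨r, hr, hball⟩ := Metric.isOpen_iff.1 hU x hxU
  obtain ⟨n, hn⟩ := exists_pow_lt_of_lt_one hr (by norm_num : (1 / 2 : ℝ) < 1)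
  have h2n : (0 : ℝ) < 2 ^ n := by positivity
  have hrn : 1 < r * 2 ^ n := by
    rw [div_pow, one_pow, div_lt_iff₀ h2n] at hn
    linarith
  have hx0 : 0 ≤ x * 2 ^ n := mul_nonneg hx.1 h2n.le
  have hfl := Nat.floor_le hx0
  have hfl' := Nat.lt_floor_add_one (x * 2 ^ n)
  refine ⟨n, ⌊x * 2 ^ n⌋₊, ?_, mem_dyadicIco.2 ⟨hfl, hfl'⟩, fun y hy => hball ?_⟩
  · rw [Nat.floor_lt hx0]
    exact_mod_cast (mul_lt_iff_lt_one_left h2n).2 hx.2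
  · rw [mem_dyadicIco] at hy
    rw [Metric.mem_ball, Real.dist_eq, abs_sub_lt_iff]
    constructor <;> nlinarith [hy.1, hy.2]

end Intervals

section Indicators

lemma μ01_dyadicIco {n k : ℕ} (hk : k < 2 ^ n) :
    μ01 (dyadicIco n k) = ENNReal.ofReal (2 ^ n)⁻¹ := by
  rw [μ01, Measure.restrict_apply (measurableSet_dyadicIco n k),
    inter_eq_left.2 ((dyadicIco_subset_Ico hk).trans Ico_subset_Icc_self), volume_dyadicIco]

noncomputable def dyadicIndicator (n k : ℕ) : L1 :=
  indicatorConstLp 1 (measurableSet_dyadicIco n k) (measure_ne_top μ01 _) 1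

lemma coeFn_dyadicIndicator (n k : ℕ) :
    dyadicIndicator n k =ᵐ[μ01] (dyadicIco n k).indicator 1 :=
  indicatorConstLp_coeFn

def dyadicIndicators : Set L1 := {f | ∃ n k, k < 2 ^ n ∧ dyadicIndicator n k = f}

lemma dyadicIndicator_eq_add (n k : ℕ) :
    dyadicIndicator n k =
      dyadicIndicator (n + 1) (2 * k) + dyadicIndicator (n + 1) (2 * k + 1) := by
  rw [dyadicIndicator, dyadicIndicator, dyadicIndicator, ← indicatorConstLp_disjoint_union]
  · simp_rw [← dyadicIco_eq_union]
  · exact disjoint_dyadicIco (by omega)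

lemma sum_dyadicIndicator (n : ℕ) (K : Finset ℕ) :
    ∑ k ∈ K, dyadicIndicator n k =
      indicatorConstLp 1 (K.measurableSet_biUnion fun k _ => measurableSet_dyadicIco n k)
        (measure_ne_top μ01 _) 1 := by
  classical
  induction K using Finset.induction_on with
  | empty => simp [indicatorConstLp_empty]
  | insert a K ha ih =>
    rw [Finset.sum_insert ha, ih, dyadicIndicator, ← indicatorConstLp_disjoint_union]
    · simp_rw [Finset.set_biUnion_insert]
    · exact disjoint_iUnion₂_right.2 fun k hk => disjoint_dyadicIco fun h => ha (h ▸ hk)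

lemma setIntegral_dyadicIndicator {n j k : ℕ} (hk : k < 2 ^ n) :
    ∫ x in dyadicIco n j, dyadicIndicator n k x ∂μ01 = if j = k then (2 ^ n)⁻¹ else 0 := by
  rw [dyadicIndicator, setIntegral_indicatorConstLp (measurableSet_dyadicIco n j), smul_eq_mul,
    mul_one]
  split_ifs with hjk
  · rw [hjk, inter_self, measureReal_def, μ01_dyadicIco hk, ENNReal.toReal_ofReal (by positivity)]
  · rw [(disjoint_dyadicIco (Ne.symm hjk)).inter_eq, measureReal_empty]

lemma eq_dyadicIndicator_zero_of_isOne {one : L1} (hone : IsOne one) :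
    one = dyadicIndicator 0 0 := by
  ext1
  filter_upwards [hone, coeFn_dyadicIndicator 0 0, ae_mem_Ico_μ01] with x h1 he hx
  rw [h1, he, indicator_of_mem (by simpa [dyadicIco] using hx), Pi.one_apply]

end Indicators

section Density

def dyadicUnions : Set (Set ℝ) :=
  {t | ∃ n, ∃ K : Finset ℕ, (∀ k ∈ K, k < 2 ^ n) ∧ ⋃ k ∈ K, dyadicIco n k = t}

open Classical in
noncomputable def dyadicInterior (U : Set ℝ) (n : ℕ) : Set ℝ :=
  ⋃ k ∈ (Finset.range (2 ^ n)).filter (dyadicIco n · ⊆ U), dyadicIco n k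

variable {U : Set ℝ}

open Classical in
lemma dyadicInterior_mem_dyadicUnions (U : Set ℝ) (n : ℕ) : dyadicInterior U n ∈ dyadicUnions :=
  ⟨n, _, fun _ hk => Finset.mem_range.1 (Finset.mem_filter.1 hk).1, rfl⟩

lemma measurableSet_dyadicInterior (U : Set ℝ) (n : ℕ) : MeasurableSet (dyadicInterior U n) :=
  Finset.measurableSet_biUnion _ fun k _ => measurableSet_dyadicIco n k

open Classical in
lemma dyadicInterior_subset (n : ℕ) : dyadicInterior U n ⊆ U :=
  iUnion₂_subset fun _ hk => (Finset.mem_filter.1 hk).2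

open Classical in
lemma monotone_dyadicInterior : Monotone (dyadicInterior U) := by
  refine monotone_nat_of_le_succ fun n x hx => ?_
  simp only [dyadicInterior, mem_iUnion₂, Finset.mem_filter, Finset.mem_range] at hx ⊢
  obtain ⟨k, ⟨hk, hkU⟩, hxk⟩ := hx
  rw [dyadicIco_eq_union] at hxk hkU
  rcases hxk with hx | hx
  · exact ⟨2 * k, ⟨by rw [pow_succ]; omega, subset_union_left.trans hkU⟩, hx⟩
  · exact ⟨2 * k + 1, ⟨by rw [pow_succ]; omega, subset_union_right.trans hkU⟩, hx⟩

open Classical in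
lemma inter_Ico_subset_iUnion_dyadicInterior (hU : IsOpen U) :
    U ∩ Ico 0 1 ⊆ ⋃ n, dyadicInterior U n := by
  rintro x ⟨hxU, hx⟩
  obtain ⟨n, k, hk, hxk, hkU⟩ := exists_dyadicIco_subset hU hxU hx
  simp only [dyadicInterior, mem_iUnion, Finset.mem_filter, Finset.mem_range]
  exact ⟨n, k, ⟨hk, hkU⟩, hxk⟩

lemma exists_mem_dyadicUnions_volume_symmDiff_lt {s : Set ℝ} (hs : MeasurableSet s)
    (hs01 : s ⊆ Ico 0 1) {ε : ENNReal} (hε : ε ≠ 0) :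
    ∃ t ∈ dyadicUnions, volume (s ∆ t) < ε := by
  have hsfin : volume s ≠ ⊤ := ((measure_mono hs01).trans_lt (by simp)).ne
  obtain ⟨U, hsU, hU, hUs⟩ := s.exists_isOpen_lt_add hsfin (ENNReal.half_pos hε).ne'
  have hUdiff : volume (U \ s) < ε / 2 :=
    measure_sdiff_lt_of_lt_add hs.nullMeasurableSet hsU hsfin hUs
  have hlim : Tendsto (fun n => volume (s \ dyadicInterior U n)) atTop (𝓝 0) := by
    have h := tendsto_measure_iInter_atTop
      (fun n => (hs.diff (measurableSet_dyadicInterior U n)).nullMeasurableSet)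
      (fun m n hmn => sdiff_subset_sdiff_right (monotone_dyadicInterior hmn))
      ⟨0, (measure_mono sdiff_subset).trans_lt hsfin.lt_top |>.ne⟩
    rwa [← sdiff_iUnion, sdiff_eq_empty.2 fun x hx =>
      inter_Ico_subset_iUnion_dyadicInterior hU ⟨hsU hx, hs01 hx⟩, measure_empty] at h
  obtain ⟨n, hn⟩ := (hlim.eventually (gt_mem_nhds (ENNReal.half_pos hε))).exists
  refine ⟨dyadicInterior U n, dyadicInterior_mem_dyadicUnions U n, ?_⟩
  calc volume (s ∆ dyadicInterior U n)
      ≤ volume (s \ dyadicInterior U n) + volume (dyadicInterior U n \ s) := measure_union_le _ _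
    _ < ε / 2 + ε / 2 := ENNReal.add_lt_add hn
      ((measure_mono (sdiff_subset_sdiff_left (dyadicInterior_subset n))).trans_lt hUdiff)
    _ = ε := ENNReal.add_halves ε

lemma measureDense_dyadicUnions : μ01.MeasureDense dyadicUnions where
  measurable := by
    rintro _ ⟨n, K, -, rfl⟩
    exact K.measurableSet_biUnion fun k _ => measurableSet_dyadicIco n k
  approx := by
    intro (s : Set ℝ) hs _ ε hε
    obtain ⟨t, ht, hst⟩ := exists_mem_dyadicUnions_volume_symmDiff_lt (hs.inter measurableSet_Ico)
      inter_subset_right (ENNReal.ofReal_pos.2 hε).ne'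
    have hae : (s ∩ Ico 0 1 : Set ℝ) =ᵐ[μ01] (s : Set ℝ) :=
      inter_ae_eq_left_of_ae_eq_univ (ae_eq_univ.2 (ae_iff.1 ae_mem_Ico_μ01))
    refine ⟨t, ht, ?_⟩
    calc μ01 (s ∆ t) = μ01 ((s ∩ Ico 0 1) ∆ t) :=
          measure_congr (ae_eq_set_symmDiff hae.symm EventuallyEq.rfl)
      _ ≤ volume ((s ∩ Ico 0 1) ∆ t) := Measure.restrict_le_self _
      _ < _ := hst

lemma dense_span_dyadicIndicators : Dense (Submodule.span ℝ dyadicIndicators : Set L1) := by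
  rw [Submodule.dense_iff_topologicalClosure_eq_top, eq_top_iff]
  rintro f -
  refine Lp.induction ENNReal.one_ne_top
    (fun f => f ∈ (Submodule.span ℝ dyadicIndicators).topologicalClosure) ?_ ?_ ?_ f
  · intro c s hs hμs
    rw [Lp.simpleFunc.coe_indicatorConst, indicatorConstLp_eq_smul_one]
    refine Submodule.smul_mem _ c ?_
    rw [← SetLike.mem_coe, Submodule.topologicalClosure_coe]
    have : Fact ((1 : ENNReal) ≠ ⊤) := ⟨ENNReal.one_ne_top⟩
    refine closure_mono ?_
      (measureDense_dyadicUnions.indicatorConstLp_subset_closure 1 (1 : ℝ) ⟨s, hs, hμs.ne, rfl⟩)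
    rintro _ ⟨_, ⟨n, K, hK, rfl⟩, -, rfl⟩
    rw [← sum_dyadicIndicator]
    exact Submodule.sum_mem _ fun k hk => Submodule.subset_span ⟨n, k, hK k hk, rfl⟩
  · intro f g _ _ _ hf hg
    exact add_mem hf hg
  · exact (Submodule.span ℝ dyadicIndicators).isClosed_topologicalClosure

end Density

section Image

variable {V : Type*} [NormedAddCommGroup V] [NormedSpace ℝ V] (δ : V × V →ₗ[ℝ] V) (v : V)

/-- `w n k` of the header: the leading binary digit of `k < 2ⁿ⁺¹` decides whether
`e (n+1) k` is `γ (e n k) 0` or `γ 0 (e n (k - 2ⁿ))`. -/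
def dyadicImage : ℕ → ℕ → V
  | 0, _ => v
  | n + 1, k => if k < 2 ^ n then δ (dyadicImage n k, 0) else δ (0, dyadicImage n (k - 2 ^ n))

variable {δ v}

lemma dyadicImage_succ_of_lt {n k : ℕ} (hk : k < 2 ^ n) :
    dyadicImage δ v (n + 1) k = δ (dyadicImage δ v n k, 0) := by
  rw [dyadicImage, if_pos hk]

lemma dyadicImage_succ_add (n k : ℕ) :
    dyadicImage δ v (n + 1) (2 ^ n + k) = δ (0, dyadicImage δ v n k) := by
  rw [dyadicImage, if_neg (by omega), Nat.add_sub_cancel_left]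

lemma norm_dyadicImage_le (hv : ‖v‖ ≤ 1) (hδnorm : ∀ x y : V, ‖δ (x, y)‖ ≤ (‖x‖ + ‖y‖) / 2)
    (n k : ℕ) : ‖dyadicImage δ v n k‖ ≤ (2 ^ n)⁻¹ := by
  induction n generalizing k with
  | zero => simpa [dyadicImage] using hv
  | succ n ih =>
    rw [dyadicImage]
    split_ifs
    · calc _ ≤ (‖dyadicImage δ v n k‖ + ‖(0 : V)‖) / 2 := hδnorm _ _
        _ ≤ ((2 ^ n)⁻¹ + 0) / 2 := by gcongr; exacts [ih k, norm_zero.le]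
        _ = (2 ^ (n + 1))⁻¹ := by ring
    · calc _ ≤ (‖(0 : V)‖ + ‖dyadicImage δ v n (k - 2 ^ n)‖) / 2 := hδnorm _ _
        _ ≤ (0 + (2 ^ n)⁻¹) / 2 := by gcongr; exacts [norm_zero.le, ih _]
        _ = (2 ^ (n + 1))⁻¹ := by ring

lemma dyadicImage_eq_add (hδv : δ (v, v) = v) {n k : ℕ} (hk : k < 2 ^ n) :
    dyadicImage δ v n k =
      dyadicImage δ v (n + 1) (2 * k) + dyadicImage δ v (n + 1) (2 * k + 1) := by
  induction n generalizing k with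
  | zero =>
    obtain rfl : k = 0 := by simpa using hk
    have h1 : dyadicImage δ v 1 1 = δ (0, v) := dyadicImage_succ_add 0 0
    rw [dyadicImage_succ_of_lt (by norm_num), mul_zero, zero_add, h1, ← map_add, Prod.mk_add_mk,
      add_zero, zero_add]
    exact hδv.symm
  | succ n ih =>
    by_cases h : k < 2 ^ n
    · have h2k : 2 * k < 2 ^ (n + 1) := by rw [pow_succ]; omega
      rw [dyadicImage_succ_of_lt h, dyadicImage_succ_of_lt h2k,
        dyadicImage_succ_of_lt (n := n + 1) (k := 2 * k + 1) (by rw [pow_succ]; omega), ← map_add,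
        Prod.mk_add_mk, add_zero, ← ih h]
    · obtain ⟨j, rfl⟩ := Nat.exists_eq_add_of_le (not_lt.1 h)
      have h2j : 2 * (2 ^ n + j) = 2 ^ (n + 1) + 2 * j := by ring
      rw [h2j, add_assoc (2 ^ (n + 1)), dyadicImage_succ_add, dyadicImage_succ_add,
        dyadicImage_succ_add, ← map_add, Prod.mk_add_mk, add_zero,
        ← ih (by rw [pow_succ] at hk; omega)]

end Image

section Approx

variable {V : Type*} [NormedAddCommGroup V] [NormedSpace ℝ V] (δ : V × V →ₗ[ℝ] V) (v : V)

/-- The operator `Tₙ` of the header. -/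
noncomputable def dyadicApprox (n : ℕ) : L1 →L[ℝ] V :=
  ∑ k ∈ Finset.range (2 ^ n),
    (setIntegralCLM μ01 (dyadicIco n k)).smulRight ((2 : ℝ) ^ n • dyadicImage δ v n k)

variable {δ v}

lemma dyadicApprox_apply (n : ℕ) (f : L1) :
    dyadicApprox δ v n f = ∑ k ∈ Finset.range (2 ^ n),
      (∫ x in dyadicIco n k, f x ∂μ01) • (2 : ℝ) ^ n • dyadicImage δ v n k := by
  simp [dyadicApprox, setIntegralCLM_apply]

lemma norm_dyadicApprox_le (hv : ‖v‖ ≤ 1)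
    (hδnorm : ∀ x y : V, ‖δ (x, y)‖ ≤ (‖x‖ + ‖y‖) / 2) (n : ℕ) : ‖dyadicApprox δ v n‖ ≤ 1 := by
  refine ContinuousLinearMap.opNorm_le_bound _ zero_le_one fun f => ?_
  have hterm : ∀ k, ‖(∫ x in dyadicIco n k, f x ∂μ01) • (2 : ℝ) ^ n • dyadicImage δ v n k‖ ≤
      ∫ x in dyadicIco n k, ‖f x‖ ∂μ01 := fun k => by
    have hw : ‖(2 : ℝ) ^ n • dyadicImage δ v n k‖ ≤ 1 := by
      rw [norm_smul, norm_pow, Real.norm_two]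
      calc (2 : ℝ) ^ n * ‖dyadicImage δ v n k‖ ≤ 2 ^ n * (2 ^ n)⁻¹ := by
            gcongr; exact norm_dyadicImage_le hv hδnorm n k
        _ = 1 := by field_simp
    rw [norm_smul]
    exact (mul_le_of_le_one_right (norm_nonneg _) hw).trans (norm_integral_le_integral_norm _)
  rw [dyadicApprox_apply, one_mul, L1.norm_eq_integral_norm]
  calc _ ≤ ∑ k ∈ Finset.range (2 ^ n), ∫ x in dyadicIco n k, ‖f x‖ ∂μ01 :=
        (norm_sum_le _ _).trans (Finset.sum_le_sum fun k _ => hterm k)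
    _ = ∫ x in ⋃ k ∈ Finset.range (2 ^ n), dyadicIco n k, ‖f x‖ ∂μ01 :=
        (integral_biUnion_finset _ (fun k _ => measurableSet_dyadicIco n k)
          (fun _ _ _ _ hjk => disjoint_dyadicIco hjk)
          fun _ _ => (L1.integrable_coeFn f).norm.integrableOn).symm
    _ ≤ ∫ x, ‖f x‖ ∂μ01 :=
        setIntegral_le_integral (L1.integrable_coeFn f).norm (ae_of_all _ fun _ => norm_nonneg _)

lemma dyadicApprox_add_apply_dyadicIndicator (hδv : δ (v, v) = v) (d : ℕ) {n k : ℕ}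
    (hk : k < 2 ^ n) : dyadicApprox δ v (n + d) (dyadicIndicator n k) = dyadicImage δ v n k := by
  induction d generalizing n k with
  | zero =>
    simp only [add_zero, dyadicApprox_apply, setIntegral_dyadicIndicator hk, ite_smul, zero_smul,
      Finset.sum_ite_eq', Finset.mem_range, hk, if_true]
    exact inv_smul_smul₀ (by positivity) _
  | succ d ih =>
    have h2k : 2 * k + 1 < 2 ^ (n + 1) := by rw [pow_succ]; omega
    rw [show n + (d + 1) = n + 1 + d by omega, dyadicIndicator_eq_add, map_add, ih (by omega),
      ih h2k, ← dyadicImage_eq_add hδv hk]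

theorem exists_apply_dyadicIndicator [CompleteSpace V] (hv : ‖v‖ ≤ 1) (hδv : δ (v, v) = v)
    (hδnorm : ∀ x y : V, ‖δ (x, y)‖ ≤ (‖x‖ + ‖y‖) / 2) :
    ∃ T : L1 →L[ℝ] V, ∀ n k, k < 2 ^ n → T (dyadicIndicator n k) = dyadicImage δ v n k := by
  have hlim : ∀ n k, k < 2 ^ n → Tendsto (fun m => dyadicApprox δ v m (dyadicIndicator n k))
      atTop (𝓝 (dyadicImage δ v n k)) := fun n k hk =>
    tendsto_atTop_of_eventually_const (i₀ := n) fun m hm => by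
      obtain ⟨d, rfl⟩ := Nat.exists_eq_add_of_le hm
      exact dyadicApprox_add_apply_dyadicIndicator hδv d hk
  obtain ⟨T, hT⟩ := ContinuousLinearMap.exists_tendsto_of_dense_span
    (norm_dyadicApprox_le hv hδnorm) dense_span_dyadicIndicators
    (by rintro _ ⟨n, k, hk, rfl⟩; exact ⟨_, hlim n k hk⟩)
  exact ⟨T, fun n k hk => tendsto_nhds_unique (hT _) (hlim n k hk)⟩

end Approx

section Juxtaposition

lemma ae_comp_two_mul {p : ℝ → Prop} (h : ∀ᵐ y ∂μ01, p y) :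
    ∀ᵐ x ∂μ01, x ∈ Ico (0 : ℝ) (1 / 2) → p (2 * x) := by
  rw [ae_μ01_iff] at h ⊢
  filter_upwards [(Measure.quasiMeasurePreserving_smul volume two_ne_zero).ae h] with x hx _ hxI
  simp only [smul_eq_mul] at hx
  exact hx ⟨by linarith [hxI.1], by linarith [hxI.2]⟩

lemma ae_comp_two_mul_sub_one {p : ℝ → Prop} (h : ∀ᵐ y ∂μ01, p y) :
    ∀ᵐ x ∂μ01, x ∈ Icc (1 / 2 : ℝ) 1 → p (2 * x - 1) := by
  rw [ae_μ01_iff] at h ⊢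
  have hqmp := (measurePreserving_sub_right volume (1 : ℝ)).quasiMeasurePreserving.comp
    (Measure.quasiMeasurePreserving_smul volume (two_ne_zero : (2 : ℝ) ≠ 0))
  filter_upwards [hqmp.ae h] with x hx _ hxI
  simp only [Function.comp, smul_eq_mul] at hx
  exact hx ⟨by linarith [hxI.1], by linarith [hxI.2]⟩

variable {γ : L1 → L1 → L1}

lemma IsJux.eq_of_ae (hγ : IsJux γ) {f g h : L1}
    (hl : ∀ᵐ x ∂μ01, x ∈ Ico (0 : ℝ) (1 / 2) → h x = f (2 * x))
    (hr : ∀ᵐ x ∂μ01, x ∈ Icc (1 / 2 : ℝ) 1 → h x = g (2 * x - 1)) : γ f g = h := by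
  ext1
  filter_upwards [(hγ f g).1, (hγ f g).2, hl, hr, ae_mem_Ico_μ01] with x h1 h2 h3 h4 hx
  rcases lt_or_ge x (1 / 2) with hx2 | hx2
  · rw [h1 ⟨hx.1, hx2⟩, h3 ⟨hx.1, hx2⟩]
  · rw [h2 ⟨hx2, hx.2.le⟩, h4 ⟨hx2, hx.2.le⟩]

lemma IsJux.add (hγ : IsJux γ) (f g f' g' : L1) : γ (f + f') (g + g') = γ f g + γ f' g' := by
  apply hγ.eq_of_ae
  · filter_upwards [Lp.coeFn_add (γ f g) (γ f' g'), (hγ f g).1, (hγ f' g').1,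
      ae_comp_two_mul (Lp.coeFn_add f f')] with x hs h1 h2 hc hx
    rw [hs, Pi.add_apply, h1 hx, h2 hx, hc hx, Pi.add_apply]
  · filter_upwards [Lp.coeFn_add (γ f g) (γ f' g'), (hγ f g).2, (hγ f' g').2,
      ae_comp_two_mul_sub_one (Lp.coeFn_add g g')] with x hs h1 h2 hc hx
    rw [hs, Pi.add_apply, h1 hx, h2 hx, hc hx, Pi.add_apply]

lemma IsJux.smul (hγ : IsJux γ) (c : ℝ) (f g : L1) : γ (c • f) (c • g) = c • γ f g := by
  apply hγ.eq_of_ae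
  · filter_upwards [Lp.coeFn_smul c (γ f g), (hγ f g).1,
      ae_comp_two_mul (Lp.coeFn_smul c f)] with x hs h1 hc hx
    rw [hs, Pi.smul_apply, h1 hx, hc hx, Pi.smul_apply]
  · filter_upwards [Lp.coeFn_smul c (γ f g), (hγ f g).2,
      ae_comp_two_mul_sub_one (Lp.coeFn_smul c g)] with x hs h1 hc hx
    rw [hs, Pi.smul_apply, h1 hx, hc hx, Pi.smul_apply]

lemma IsJux.norm_eq (hγ : IsJux γ) (f g : L1) : ‖γ f g‖ = (‖f‖ + ‖g‖) / 2 := by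
  have hl : ∀ᵐ x, x ∈ Ι (0 : ℝ) (1 / 2) → ‖γ f g x‖ = ‖f (2 * x)‖ := by
    -- `IsJux` speaks about `[0, 1/2)`, the interval integral about `(0, 1/2]`.
    filter_upwards [ae_μ01_iff.1 (hγ f g).1, volume.ae_ne (1 / 2)] with x h hne hx
    rw [uIoc_of_le (by norm_num)] at hx
    rw [h ⟨hx.1.le, by linarith [hx.2]⟩ ⟨hx.1.le, lt_of_le_of_ne hx.2 hne⟩]
  have hr : ∀ᵐ x, x ∈ Ι (1 / 2 : ℝ) 1 → ‖γ f g x‖ = ‖g (2 * x - 1)‖ := by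
    filter_upwards [ae_μ01_iff.1 (hγ f g).2] with x h hx
    rw [uIoc_of_le (by norm_num)] at hx
    rw [h ⟨by linarith [hx.1], hx.2⟩ ⟨hx.1.le, hx.2⟩]
  rw [L1.norm_eq_integral_norm, L1.norm_eq_integral_norm, L1.norm_eq_integral_norm,
    integral_μ01, integral_μ01, integral_μ01,
    ← intervalIntegral.integral_add_adjacent_intervals
      (intervalIntegrable_norm_coeFn _ (b := 1 / 2) le_rfl (by norm_num) (by norm_num))
      (intervalIntegrable_norm_coeFn _ (a := 1 / 2) (by norm_num) (by norm_num) le_rfl),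
    intervalIntegral.integral_congr_ae hl, intervalIntegral.integral_congr_ae hr,
    intervalIntegral.integral_comp_mul_left (fun x => ‖f x‖) two_ne_zero,
    intervalIntegral.integral_comp_mul_sub (fun x => ‖g x‖) two_ne_zero]
  norm_num
  ring

noncomputable def IsJux.leftCLM (hγ : IsJux γ) : L1 →L[ℝ] L1 :=
  LinearMap.mkContinuous
    { toFun := fun f => γ f 0
      map_add' := fun f f' => by simpa using hγ.add f 0 f' 0
      map_smul' := fun c f => by simpa using hγ.smul c f 0 }
    (1 / 2) fun f => by simp [hγ.norm_eq, div_eq_inv_mul]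

noncomputable def IsJux.rightCLM (hγ : IsJux γ) : L1 →L[ℝ] L1 :=
  LinearMap.mkContinuous
    { toFun := fun g => γ 0 g
      map_add' := fun g g' => by simpa using hγ.add 0 g 0 g'
      map_smul' := fun c g => by simpa using hγ.smul c 0 g }
    (1 / 2) fun g => by simp [hγ.norm_eq, div_eq_inv_mul]

lemma IsJux.dyadicIndicator_zero (hγ : IsJux γ) {n k : ℕ} (hk : k < 2 ^ n) :
    γ (dyadicIndicator n k) 0 = dyadicIndicator (n + 1) k := by
  apply hγ.eq_of_ae
  · filter_upwards [coeFn_dyadicIndicator (n + 1) k,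
      ae_comp_two_mul (coeFn_dyadicIndicator n k)] with x h1 h2 hx
    rw [h1, h2 hx, ← preimage_two_mul_dyadicIco]
    exact indicator_comp_right (fun x => 2 * x) (g := 1)
  · filter_upwards [coeFn_dyadicIndicator (n + 1) k,
      ae_comp_two_mul_sub_one (Lp.coeFn_zero ℝ 1 μ01)] with x h1 h2 hx
    rw [h1, h2 hx, indicator_of_notMem fun h => not_lt.2 hx.1 (dyadicIco_succ_subset_Iio hk h)]
    rfl

lemma IsJux.zero_dyadicIndicator (hγ : IsJux γ) (n k : ℕ) :
    γ 0 (dyadicIndicator n k) = dyadicIndicator (n + 1) (2 ^ n + k) := by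
  apply hγ.eq_of_ae
  · filter_upwards [coeFn_dyadicIndicator (n + 1) (2 ^ n + k),
      ae_comp_two_mul (Lp.coeFn_zero ℝ 1 μ01)] with x h1 h2 hx
    rw [h1, h2 hx, indicator_of_notMem fun h => not_le.2 hx.2 (dyadicIco_succ_add_subset_Ici n k h)]
    rfl
  · filter_upwards [coeFn_dyadicIndicator (n + 1) (2 ^ n + k),
      ae_comp_two_mul_sub_one (coeFn_dyadicIndicator n k)] with x h1 h2 hx
    rw [h1, h2 hx, ← preimage_two_mul_sub_one_dyadicIco]
    exact indicator_comp_right (fun x => 2 * x - 1) (g := 1)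

end Juxtaposition

section Main

variable {V : Type*} [NormedAddCommGroup V] [NormedSpace ℝ V] {δ : V × V →ₗ[ℝ] V} {v : V}
  {γ : L1 → L1 → L1}

lemma IsJux.map_jux_of_apply_dyadicIndicator (hγ : IsJux γ)
    (hδnorm : ∀ x y : V, ‖δ (x, y)‖ ≤ (‖x‖ + ‖y‖) / 2) {T : L1 →L[ℝ] V}
    (hT : ∀ n k, k < 2 ^ n → T (dyadicIndicator n k) = dyadicImage δ v n k) (f g : L1) :
    T (γ f g) = δ (T f, T g) := by
  let δc : V × V →L[ℝ] V := δ.mkContinuous 1 fun p => by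
    have := hδnorm p.1 p.2
    rw [one_mul]
    linarith [norm_fst_le p, norm_snd_le p]
  have hleft : T.comp hγ.leftCLM = (δc.comp (.inl ℝ V V)).comp T :=
    ContinuousLinearMap.ext_on dense_span_dyadicIndicators <| by
      rintro _ ⟨n, k, hk, rfl⟩
      show T (γ _ 0) = δ (T _, 0)
      rw [hγ.dyadicIndicator_zero hk, hT (n + 1) k (by rw [pow_succ]; omega), hT n k hk,
        dyadicImage_succ_of_lt hk]
  have hright : T.comp hγ.rightCLM = (δc.comp (.inr ℝ V V)).comp T :=
    ContinuousLinearMap.ext_on dense_span_dyadicIndicators <| by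
      rintro _ ⟨n, k, hk, rfl⟩
      show T (γ 0 _) = δ (0, T _)
      rw [hγ.zero_dyadicIndicator, hT (n + 1) (2 ^ n + k) (by rw [pow_succ]; omega), hT n k hk,
        dyadicImage_succ_add]
  calc T (γ f g) = T (γ f 0) + T (γ 0 g) := by rw [← map_add, ← hγ.add, add_zero, zero_add]
    _ = δ (T f, 0) + δ (0, T g) := by
        congr 1
        exacts [DFunLike.congr_fun hleft f, DFunLike.congr_fun hright g]
    _ = δ (T f, T g) := by rw [← map_add, Prod.mk_add_mk, add_zero, zero_add]

lemma IsJux.apply_dyadicIndicator_of_map_jux (hγ : IsJux γ) {one : L1} (hone : IsOne one)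
    {T : L1 →L[ℝ] V} (hTone : T one = v) (hT : ∀ f g, T (γ f g) = δ (T f, T g)) {n k : ℕ}
    (hk : k < 2 ^ n) : T (dyadicIndicator n k) = dyadicImage δ v n k := by
  induction n generalizing k with
  | zero =>
    obtain rfl : k = 0 := by simpa using hk
    rw [← eq_dyadicIndicator_zero_of_isOne hone, hTone]
    rfl
  | succ n ih =>
    by_cases h : k < 2 ^ n
    · rw [← hγ.dyadicIndicator_zero h, hT, ih h, map_zero, dyadicImage_succ_of_lt h]
    · obtain ⟨j, rfl⟩ := Nat.exists_eq_add_of_le (not_lt.1 h)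
      rw [← hγ.zero_dyadicIndicator, hT, ih (by rw [pow_succ] at hk; omega), map_zero,
        dyadicImage_succ_add]

end Main

/-- for a real Banach space `V`, an element `v` with `‖v‖ ≤ 1` and a
linear map `δ : V × V → V` with `δ(v,v) = v` and `‖δ(x,y)‖ ≤ (‖x‖+‖y‖)/2`, there
is a unique continuous linear map `T : L¹([0,1];ℝ) → V` with `T 𝟙 = v` and
`T (γ f g) = δ (T f, T g)`. -/
theorem stmt_6 {V : Type*} [NormedAddCommGroup V] [NormedSpace ℝ V] [CompleteSpace V]
    (v : V) (hv : ‖v‖ ≤ 1)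
    (δ : V × V →ₗ[ℝ] V)
    (hδv : δ (v, v) = v)
    (hδnorm : ∀ x y : V, ‖δ (x, y)‖ ≤ (‖x‖ + ‖y‖) / 2)
    (γ : L1 → L1 → L1) (hγ : IsJux γ)
    (one : L1) (hone : IsOne one) :
    ∃! T : L1 →L[ℝ] V, T one = v ∧ ∀ f g : L1, T (γ f g) = δ (T f, T g) := by
  obtain ⟨T, hT⟩ := exists_apply_dyadicIndicator hv hδv hδnorm
  refine ⟨T, ⟨?_, hγ.map_jux_of_apply_dyadicIndicator hδnorm hT⟩, ?_⟩
  · rw [eq_dyadicIndicator_zero_of_isOne hone, hT 0 0 one_pos]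
    rfl
  · rintro T' ⟨hT'one, hT'γ⟩
    refine ContinuousLinearMap.ext_on dense_span_dyadicIndicators ?_
    rintro _ ⟨n, k, hk, rfl⟩
    rw [hγ.apply_dyadicIndicator_of_map_jux hone hT'one hT'γ hk, hT n k hk]
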